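/- arXiv:2104.13707 — 2 statements merged into one kernel-verified Lean document; each statement's English description precedes it below -/
import Mathlib

section
/- For positive semidefinite Hermitian matrices A and B of the same size, the maximum of tr(C) + tr(C*) over all complex matrices C satisfying that the block matrix [[A, C],[C*, B]] is positive semidefinite equals 2·tr((B^{1/2} A B^{1/2})^{1/2}). -/
open Matrix
open scoped ComplexOrder

/-- The positive semidefinite square root of a positive semidefinite matrix
(the definition removed from Mathlib, restored with its old value). -/
noncomputable def Matrix.PosSemidef.sqrt {n : Type*} [Fintype n] [DecidableEq n] {𝕜 : Type*}
    [RCLike 𝕜] {A : Matrix n n 𝕜} (hA : A.PosSemidef) : Matrix n n 𝕜 :=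
  hA.1.eigenvectorUnitary.1 * diagonal ((↑) ∘ (√·) ∘ hA.1.eigenvalues) *
  (star hA.1.eigenvectorUnitary : Matrix n n 𝕜)

/-!
Write `X = A^{1/2}`, `Y = B^{1/2}` and `Kᴴ K ≤ 1` (Loewner order) for "`K` is a contraction".
The block matrix `[[X², C], [Cᴴ, Y²]]` is positive semidefinite iff `C = X K Y` for a contraction
`K`: one direction is a congruence of `[[1, K], [Kᴴ, 1]]`, the other takes `K = X⁺ C Y⁺` with
pseudo-inverses, using that positivity forces `C` to vanish on `ker Y` and `Cᴴ` on `ker X`.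
Let `T = (Y X² Y)^{1/2}` and write the polar decomposition `Y X = T V`, with `V Vᴴ` the support
projection of `T`. Then `tr (X K Y) = tr (V K T)`, and `Re tr (L T) ≤ tr T` for every contraction
`L` (expand `tr ((1 - L) T (1 - L)ᴴ) ≥ 0`), with equality for `K = Vᴴ`.
-/

open scoped MatrixOrder

variable {m n 𝕜 : Type*} [Fintype n] [RCLike 𝕜]

theorem Matrix.trace_add_trace_conjTranspose (C : Matrix n n 𝕜) :
    C.trace + Cᴴ.trace = ((2 * RCLike.re C.trace : ℝ) : 𝕜) := by
  rw [trace_conjTranspose, RCLike.star_def, RCLike.add_conj]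
  push_cast
  ring

variable [DecidableEq n]

namespace Matrix.PosSemidef

variable {A : Matrix n n 𝕜}

theorem sqrt_eq_cfc (hA : A.PosSemidef) : hA.sqrt = cfc Real.sqrt A := by
  rw [hA.1.cfc_eq, IsHermitian.cfc, Unitary.conjStarAlgAut_apply]
  rfl

theorem posSemidef_sqrt (hA : A.PosSemidef) : hA.sqrt.PosSemidef := by
  rw [sqrt_eq_cfc, ← nonneg_iff_posSemidef]
  exact cfc_nonneg fun x _ => Real.sqrt_nonneg x

theorem sqrt_mul_self (hA : A.PosSemidef) : hA.sqrt * hA.sqrt = A := by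
  have hA' : IsSelfAdjoint A := hA.1
  rw [sqrt_eq_cfc, ← cfc_mul Real.sqrt Real.sqrt A]
  conv_rhs => rw [← cfc_id' ℝ A]
  exact cfc_congr fun x hx => Real.mul_self_sqrt (spectrum_nonneg_of_nonneg hA.nonneg hx)

theorem exists_eq_conjTranspose_mul_self (hA : A.PosSemidef) :
    ∃ S : Matrix n n 𝕜, A = Sᴴ * S :=
  ⟨hA.sqrt, by rw [hA.posSemidef_sqrt.1.eq, hA.sqrt_mul_self]⟩

theorem mul_eq_zero_of_conjTranspose_mul_mul_eq_zero (hA : A.PosSemidef) {Z : Matrix n m 𝕜}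
    (h : Zᴴ * A * Z = 0) : A * Z = 0 := by
  obtain ⟨S, rfl⟩ := hA.exists_eq_conjTranspose_mul_self
  rw [conjTranspose_mul_self_mul_eq_zero, ← conjTranspose_mul_self_eq_zero]
  simpa only [conjTranspose_mul, Matrix.mul_assoc] using h

theorem trace_mul_nonneg {B : Matrix n n 𝕜} (hA : A.PosSemidef) (hB : B.PosSemidef) :
    0 ≤ (A * B).trace := by
  obtain ⟨S, rfl⟩ := hA.exists_eq_conjTranspose_mul_self
  rw [Matrix.mul_assoc, trace_mul_comm]
  exact (hB.mul_mul_conjTranspose_same S).trace_nonneg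

end Matrix.PosSemidef

namespace Matrix

/-- For Hermitian `A` this is the Moore–Penrose pseudo-inverse; for other `A` it is the junk
value `0` of `cfc`. -/
noncomputable def pinv (A : Matrix n n 𝕜) : Matrix n n 𝕜 := cfc (·⁻¹ : ℝ → ℝ) A

variable {A : Matrix n n 𝕜}

theorem isHermitian_pinv (A : Matrix n n 𝕜) : A.pinv.IsHermitian :=
  cfc_predicate _ A

theorem IsHermitian.commute_pinv (hA : A.IsHermitian) : Commute A A.pinv := by
  have hA' : IsSelfAdjoint A := hA
  nth_rw 1 [← cfc_id' ℝ A]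
  exact cfc_commute_cfc _ _ A

theorem IsHermitian.mul_pinv_mul_self (hA : A.IsHermitian) : A * A.pinv * A = A := by
  have hA' : IsSelfAdjoint A := hA
  have hfin := A.finite_real_spectrum
  nth_rw 1 [← cfc_id' ℝ A]
  nth_rw 3 [← cfc_id' ℝ A]
  rw [pinv, ← cfc_mul _ _ A (continuousOn_id' _) (hfin.continuousOn _),
    ← cfc_mul _ _ A (hfin.continuousOn _) (continuousOn_id' _)]
  nth_rw 2 [← cfc_id' ℝ A]
  refine cfc_congr fun x _ => ?_
  rcases eq_or_ne x 0 with rfl | hx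
  · simp
  · field_simp

theorem IsHermitian.mul_mul_pinv (hA : A.IsHermitian) : A * (A * A.pinv) = A := by
  rw [hA.commute_pinv.eq, ← Matrix.mul_assoc, hA.mul_pinv_mul_self]

theorem IsHermitian.isStarProjection_mul_pinv (hA : A.IsHermitian) :
    IsStarProjection (A * A.pinv) := by
  refine ⟨by rw [IsIdempotentElem, ← Matrix.mul_assoc, hA.mul_pinv_mul_self], ?_⟩
  rw [IsSelfAdjoint, star_eq_conjTranspose, conjTranspose_mul, A.isHermitian_pinv.eq, hA.eq]
  exact hA.commute_pinv.eq.symm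

theorem conjTranspose_mul_self_le_one_mul {K L : Matrix n n 𝕜} (hK : Kᴴ * K ≤ 1)
    (hL : Lᴴ * L ≤ 1) : (K * L)ᴴ * (K * L) ≤ 1 := by
  have h := star_left_conjugate_le_conjugate hK L
  rw [star_eq_conjTranspose, Matrix.mul_one] at h
  calc (K * L)ᴴ * (K * L) = Lᴴ * (Kᴴ * K) * L := by
        rw [conjTranspose_mul]; simp only [Matrix.mul_assoc]
    _ ≤ 1 := h.trans hL

theorem re_trace_mul_le_of_conjTranspose_mul_self_le_one {K T : Matrix n n 𝕜}
    (hT : T.PosSemidef) (hK : Kᴴ * K ≤ 1) : RCLike.re (K * T).trace ≤ RCLike.re T.trace := by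
  have h₁ := RCLike.nonneg_iff.mp (hT.mul_mul_conjTranspose_same (1 - K)).trace_nonneg
  have h₂ := RCLike.nonneg_iff.mp (hT.trace_mul_nonneg hK)
  have hadj : RCLike.re (T * Kᴴ).trace = RCLike.re (K * T).trace := by
    have : (K * T)ᴴ = T * Kᴴ := by rw [conjTranspose_mul, hT.1.eq]
    rw [← this, trace_conjTranspose, RCLike.star_def, RCLike.conj_re]
  have hcyc : (K * T * Kᴴ).trace = (T * (Kᴴ * K)).trace := by
    rw [trace_mul_comm, ← Matrix.mul_assoc, trace_mul_comm]
  simp only [conjTranspose_sub, conjTranspose_one, Matrix.sub_mul, Matrix.mul_sub,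
    Matrix.one_mul, Matrix.mul_one, trace_sub, map_sub] at h₁ h₂
  rw [hcyc] at h₁
  linarith [h₁.1, h₂.1]

/-- Polar decomposition `N = T V` for `T = (N Nᴴ)^{1/2}`: `V = T⁺ N`, and `V Vᴴ = T T⁺`. -/
theorem exists_mul_eq_of_mul_self_eq {T N : Matrix n n 𝕜} (hT : T.IsHermitian)
    (h : T * T = N * Nᴴ) : ∃ V, T * V = N ∧ T * (V * Vᴴ) = T ∧ V * Vᴴ ≤ 1 := by
  have hP := hT.isStarProjection_mul_pinv
  have hQ : (1 - T * T.pinv)ᴴ = 1 - T * T.pinv := hP.one_sub.isSelfAdjoint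
  have hTQ : T * (1 - T * T.pinv) = 0 := by
    rw [Matrix.mul_sub, Matrix.mul_one, hT.mul_mul_pinv, sub_self]
  have hQN : (1 - T * T.pinv) * N = 0 := by
    rw [← self_mul_conjTranspose_eq_zero, conjTranspose_mul, hQ, Matrix.mul_assoc,
      ← Matrix.mul_assoc N, ← h, Matrix.mul_assoc, hTQ, Matrix.mul_zero, Matrix.mul_zero]
  have hVV : T.pinv * N * (T.pinv * N)ᴴ = T * T.pinv :=
    calc T.pinv * N * (T.pinv * N)ᴴ = T.pinv * T * (T * T.pinv) := by
          rw [conjTranspose_mul, T.isHermitian_pinv.eq, Matrix.mul_assoc, ← Matrix.mul_assoc N,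
            ← h]
          simp only [Matrix.mul_assoc]
      _ = T * T.pinv := by rw [← hT.commute_pinv.eq, hP.isIdempotentElem]
  refine ⟨T.pinv * N, ?_, by rw [hVV, hT.mul_mul_pinv], by rw [hVV]; exact hP.le_one⟩
  rw [Matrix.sub_mul, Matrix.one_mul, sub_eq_zero] at hQN
  rw [← Matrix.mul_assoc, ← hQN]

section Blocks

variable [Fintype m] [DecidableEq m]

theorem PosSemidef.fromBlocks_diag {A : Matrix m m 𝕜} {B : Matrix n n 𝕜} (hA : A.PosSemidef)
    (hB : B.PosSemidef) : (fromBlocks A 0 0 B).PosSemidef := by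
  obtain ⟨S, rfl⟩ := hA.exists_eq_conjTranspose_mul_self
  obtain ⟨R, rfl⟩ := hB.exists_eq_conjTranspose_mul_self
  simpa [fromBlocks_conjTranspose, fromBlocks_multiply] using
    posSemidef_conjTranspose_mul_self (fromBlocks S 0 0 R)

theorem PosSemidef.mul_eq_zero_of_fromBlocks_right {A : Matrix m m 𝕜} {B : Matrix n n 𝕜}
    {C : Matrix m n 𝕜} (hM : (fromBlocks A C Cᴴ B).PosSemidef) {X : Matrix n n 𝕜}
    (hX : B * X = 0) : C * X = 0 := by
  have := hM.mul_eq_zero_of_conjTranspose_mul_mul_eq_zero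
    (Z := (fromBlocks 0 0 0 X : Matrix (m ⊕ n) (m ⊕ n) 𝕜))
    (by simp [fromBlocks_conjTranspose, fromBlocks_multiply, Matrix.mul_assoc, hX])
  simpa [fromBlocks_multiply, hX, ← fromBlocks_zero, fromBlocks_inj] using this

theorem PosSemidef.mul_eq_zero_of_fromBlocks_left {A : Matrix m m 𝕜} {B : Matrix n n 𝕜}
    {C : Matrix m n 𝕜} (hM : (fromBlocks A C Cᴴ B).PosSemidef) {X : Matrix m m 𝕜}
    (hX : A * X = 0) : Cᴴ * X = 0 := by
  have := hM.mul_eq_zero_of_conjTranspose_mul_mul_eq_zero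
    (Z := (fromBlocks X 0 0 0 : Matrix (m ⊕ n) (m ⊕ n) 𝕜))
    (by simp [fromBlocks_conjTranspose, fromBlocks_multiply, Matrix.mul_assoc, hX])
  simpa [fromBlocks_multiply, hX, ← fromBlocks_zero, fromBlocks_inj] using this

theorem posSemidef_fromBlocks_one_iff {K : Matrix m n 𝕜} :
    (fromBlocks 1 K Kᴴ 1).PosSemidef ↔ Kᴴ * K ≤ 1 := by
  let : Invertible (1 : Matrix m m 𝕜) := invertibleOne
  rw [PosDef.fromBlocks₁₁ K 1 PosDef.one, inv_one, Matrix.mul_one, le_iff]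

theorem posSemidef_fromBlocks_one_iff_mul_conjTranspose {K : Matrix m n 𝕜} :
    (fromBlocks 1 K Kᴴ 1).PosSemidef ↔ K * Kᴴ ≤ 1 := by
  let : Invertible (1 : Matrix n n 𝕜) := invertibleOne
  rw [PosDef.fromBlocks₂₂ 1 K PosDef.one, inv_one, Matrix.mul_one, le_iff]

theorem conjTranspose_mul_self_le_one_iff {K : Matrix m n 𝕜} : Kᴴ * K ≤ 1 ↔ K * Kᴴ ≤ 1 :=
  posSemidef_fromBlocks_one_iff.symm.trans posSemidef_fromBlocks_one_iff_mul_conjTranspose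

theorem posSemidef_fromBlocks_mul_mul {X : Matrix m m 𝕜} {Y : Matrix n n 𝕜} {K : Matrix m n 𝕜}
    (hX : X.IsHermitian) (hY : Y.IsHermitian) (hK : Kᴴ * K ≤ 1) :
    (fromBlocks (X * X) (X * K * Y) (X * K * Y)ᴴ (Y * Y)).PosSemidef := by
  have := (posSemidef_fromBlocks_one_iff.mpr hK).conjTranspose_mul_mul_same (fromBlocks X 0 0 Y)
  simpa [fromBlocks_conjTranspose, fromBlocks_multiply, hX.eq, hY.eq, Matrix.mul_assoc] using this

theorem exists_eq_mul_mul_of_posSemidef_fromBlocks {X : Matrix m m 𝕜} {Y : Matrix n n 𝕜}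
    {C : Matrix m n 𝕜} (hX : X.IsHermitian) (hY : Y.IsHermitian)
    (hM : (fromBlocks (X * X) C Cᴴ (Y * Y)).PosSemidef) :
    ∃ K : Matrix m n 𝕜, Kᴴ * K ≤ 1 ∧ C = X * K * Y := by
  have hPX := hX.isStarProjection_mul_pinv
  have hPY := hY.isStarProjection_mul_pinv
  have hCY : C * (1 - Y * Y.pinv) = 0 := hM.mul_eq_zero_of_fromBlocks_right <| by
    rw [Matrix.mul_assoc, Matrix.mul_sub, Matrix.mul_one, hY.mul_mul_pinv, sub_self,
      Matrix.mul_zero]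
  have hCX : Cᴴ * (1 - X * X.pinv) = 0 := hM.mul_eq_zero_of_fromBlocks_left <| by
    rw [Matrix.mul_assoc, Matrix.mul_sub, Matrix.mul_one, hX.mul_mul_pinv, sub_self,
      Matrix.mul_zero]
  refine ⟨X.pinv * C * Y.pinv, ?_, ?_⟩
  · rw [← posSemidef_fromBlocks_one_iff]
    have h := (hM.conjTranspose_mul_mul_same (fromBlocks X.pinv 0 0 Y.pinv)).add
      (PosSemidef.fromBlocks_diag hPX.one_sub_nonneg.posSemidef hPY.one_sub_nonneg.posSemidef)
    convert h using 2
    simp [fromBlocks_conjTranspose, fromBlocks_multiply, fromBlocks_add, X.isHermitian_pinv.eq,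
      Y.isHermitian_pinv.eq, hX.mul_mul_pinv, hY.mul_mul_pinv, hX.commute_pinv.eq.symm,
      hY.commute_pinv.eq.symm, Matrix.mul_assoc]
  · have hCY' : C * (Y * Y.pinv) = C := by
      rwa [Matrix.mul_sub, Matrix.mul_one, sub_eq_zero, eq_comm] at hCY
    have hCX' : C = X * X.pinv * C := by
      have h := congrArg conjTranspose hCX
      rwa [conjTranspose_mul, conjTranspose_conjTranspose, conjTranspose_zero,
        show (1 - X * X.pinv)ᴴ = 1 - X * X.pinv from hPX.one_sub.isSelfAdjoint, Matrix.sub_mul,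
        Matrix.one_mul, sub_eq_zero] at h
    calc C = X * X.pinv * C * (Y * Y.pinv) := by rw [Matrix.mul_assoc, hCY', ← hCX']
      _ = X * (X.pinv * C * Y.pinv) * Y := by
        rw [hY.commute_pinv.eq]; simp only [Matrix.mul_assoc]

end Blocks

theorem isGreatest_trace_add_trace_conjTranspose {X Y T : Matrix n n 𝕜} (hX : X.IsHermitian)
    (hY : Y.IsHermitian) (hT : T.PosSemidef) (hTT : T * T = Y * (X * X) * Y) :
    IsGreatest {x : ℝ | ∃ C : Matrix n n 𝕜,
        (fromBlocks (X * X) C Cᴴ (Y * Y)).PosSemidef ∧ (x : 𝕜) = C.trace + Cᴴ.trace}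
      (2 * RCLike.re T.trace) := by
  obtain ⟨V, hTV, hTVV, hV⟩ := exists_mul_eq_of_mul_self_eq hT.1 (N := Y * X) <| by
    rw [hTT, conjTranspose_mul, hX.eq, hY.eq]; simp only [Matrix.mul_assoc]
  have htrace (K : Matrix n n 𝕜) : (X * K * Y).trace = (V * K * T).trace := by
    rw [trace_mul_cycle, ← hTV, trace_mul_cycle V]
  constructor
  · refine ⟨X * Vᴴ * Y, posSemidef_fromBlocks_mul_mul hX hY ?_, ?_⟩
    · rwa [conjTranspose_conjTranspose]
    · rw [trace_add_trace_conjTranspose, htrace, trace_mul_comm, hTVV]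
  · rintro x ⟨C, hM, hx⟩
    obtain ⟨K, hK, rfl⟩ := exists_eq_mul_mul_of_posSemidef_fromBlocks hX hY hM
    rw [trace_add_trace_conjTranspose, htrace, RCLike.ofReal_inj] at hx
    have hVK := conjTranspose_mul_self_le_one_mul (conjTranspose_mul_self_le_one_iff.mpr hV) hK
    linarith [re_trace_mul_le_of_conjTranspose_mul_self_le_one hT hVK]

end Matrix

theorem otp_block_trace_max (n : ℕ) (A B : Matrix (Fin n) (Fin n) ℂ)
    (hA : A.PosSemidef) (hB : B.PosSemidef)
    (hS : (hB.sqrt * A * hB.sqrt).PosSemidef) :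
    IsGreatest
      {x : ℝ | ∃ C : Matrix (Fin n) (Fin n) ℂ,
        (Matrix.fromBlocks A C Cᴴ B).PosSemidef ∧ (x : ℂ) = C.trace + Cᴴ.trace}
      (2 * (hS.sqrt.trace.re)) := by
  have h := isGreatest_trace_add_trace_conjTranspose hA.posSemidef_sqrt.1 hB.posSemidef_sqrt.1
    hS.posSemidef_sqrt (by rw [hS.sqrt_mul_self, hA.sqrt_mul_self])
  rwa [hA.sqrt_mul_self, hB.sqrt_mul_self] at h
end

section
/- Let A, B be positive definite Hermitian matrices, let U := B^{-1/2} A^{-1/2} (A^{1/2} B A^{1/2})^{1/2}, and set C := A^{1/2} U* B^{1/2}. Then the block matrix [[A, C],[C*, B]] is positive semidefinite and tr(C) = tr((B^{1/2} A B^{1/2})^{1/2}). -/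
open Matrix
open scoped ComplexOrder

open scoped MatrixOrder in
lemma Matrix.PosSemidef.sqrt_eq_cfcSqrt {n : Type*} [Fintype n] [DecidableEq n] {𝕜 : Type*}
    [RCLike 𝕜] {A : Matrix n n 𝕜} (hA : A.PosSemidef) : hA.sqrt = CFC.sqrt A := by
  rw [CFC.sqrt_eq_real_sqrt A hA.nonneg, cfcₙ_eq_cfc, hA.1.cfc_eq, IsHermitian.cfc,
    Unitary.conjStarAlgAut_apply]
  rfl

open scoped MatrixOrder in
lemma Matrix.PosSemidef.posSemidef_sqrt_s11 {n : Type*} [Fintype n] [DecidableEq n] {𝕜 : Type*}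
    [RCLike 𝕜] {A : Matrix n n 𝕜} (hA : A.PosSemidef) : hA.sqrt.PosSemidef := by
  rw [hA.sqrt_eq_cfcSqrt]
  exact (CFC.sqrt_nonneg A).posSemidef

open scoped MatrixOrder in
lemma Matrix.PosSemidef.sqrt_mul_self_s11 {n : Type*} [Fintype n] [DecidableEq n] {𝕜 : Type*}
    [RCLike 𝕜] {A : Matrix n n 𝕜} (hA : A.PosSemidef) : hA.sqrt * hA.sqrt = A := by
  rw [hA.sqrt_eq_cfcSqrt]
  exact CFC.sqrt_mul_sqrt_self A hA.nonneg

open scoped MatrixOrder in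
lemma Matrix.PosSemidef.eq_sqrt_of_sq_eq {n : Type*} [Fintype n] [DecidableEq n] {𝕜 : Type*}
    [RCLike 𝕜] {A : Matrix n n 𝕜} (hA : A.PosSemidef) {B : Matrix n n 𝕜} (hB : B.PosSemidef)
    (hAB : A ^ 2 = B) : A = hB.sqrt := by
  rw [hB.sqrt_eq_cfcSqrt]
  exact (CFC.sqrt_unique (by rw [← sq]; exact hAB) hA.nonneg).symm

set_option maxHeartbeats 2000000 in
theorem optimal_coupling_achieves_hellinger (n : ℕ)
    (A B : Matrix (Fin n) (Fin n) ℂ) (hA : A.PosDef) (hB : B.PosDef)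
    (hSA : (hA.posSemidef.sqrt * B * hA.posSemidef.sqrt).PosSemidef)
    (hSB : (hB.posSemidef.sqrt * A * hB.posSemidef.sqrt).PosSemidef) :
    (Matrix.fromBlocks A
        (hA.posSemidef.sqrt * (hB.posSemidef.sqrt⁻¹ * hA.posSemidef.sqrt⁻¹ * hSA.sqrt)ᴴ * hB.posSemidef.sqrt)
        (hA.posSemidef.sqrt * (hB.posSemidef.sqrt⁻¹ * hA.posSemidef.sqrt⁻¹ * hSA.sqrt)ᴴ * hB.posSemidef.sqrt)ᴴ
        B).PosSemidef ∧
      (hA.posSemidef.sqrt * (hB.posSemidef.sqrt⁻¹ * hA.posSemidef.sqrt⁻¹ * hSA.sqrt)ᴴ * hB.posSemidef.sqrt).trace =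
        hSB.sqrt.trace := by
  set a := hA.posSemidef.sqrt with ha
  set b := hB.posSemidef.sqrt with hb
  set S := hSA.sqrt with hS
  have haPSD : a.PosSemidef := hA.posSemidef.posSemidef_sqrt_s11
  have hbPSD : b.PosSemidef := hB.posSemidef.posSemidef_sqrt_s11
  have hSPSD : S.PosSemidef := hSA.posSemidef_sqrt_s11
  have haH : aᴴ = a := haPSD.1
  have hbH : bᴴ = b := hbPSD.1
  have hSH : Sᴴ = S := hSPSD.1
  have haa : a * a = A := hA.posSemidef.sqrt_mul_self_s11
  have hbb : b * b = B := hB.posSemidef.sqrt_mul_self_s11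
  have hSS : S * S = a * B * a := hSA.sqrt_mul_self_s11
  -- invertibility
  have hda : IsUnit a.det := by
    have h : IsUnit (a.det * a.det) := by
      rw [← Matrix.det_mul, haa]; exact hA.det_pos.ne'.isUnit
    exact isUnit_of_mul_isUnit_left h
  have hdb : IsUnit b.det := by
    have h : IsUnit (b.det * b.det) := by
      rw [← Matrix.det_mul, hbb]; exact hB.det_pos.ne'.isUnit
    exact isUnit_of_mul_isUnit_left h
  have hdS : IsUnit S.det := by
    have h : IsUnit (S.det * S.det) := by
      rw [← Matrix.det_mul, hSS]
      simp only [Matrix.det_mul]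
      exact (hda.mul hB.det_pos.ne'.isUnit).mul hda
    exact isUnit_of_mul_isUnit_left h
  have hai : a⁻¹ * a = 1 := Matrix.nonsing_inv_mul a hda
  have hia : a * a⁻¹ = 1 := Matrix.mul_nonsing_inv a hda
  have hbi : b⁻¹ * b = 1 := Matrix.nonsing_inv_mul b hdb
  have hib : b * b⁻¹ = 1 := Matrix.mul_nonsing_inv b hdb
  have hSi : S⁻¹ * S = 1 := Matrix.nonsing_inv_mul S hdS
  have hiS : S * S⁻¹ = 1 := Matrix.mul_nonsing_inv S hdS
  -- cancellation helpers
  have ca1 : ∀ x : Matrix (Fin n) (Fin n) ℂ, a * (a⁻¹ * x) = x := fun x => by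
    rw [← Matrix.mul_assoc, hia, Matrix.one_mul]
  have ca2 : ∀ x : Matrix (Fin n) (Fin n) ℂ, a⁻¹ * (a * x) = x := fun x => by
    rw [← Matrix.mul_assoc, hai, Matrix.one_mul]
  have cb1 : ∀ x : Matrix (Fin n) (Fin n) ℂ, b * (b⁻¹ * x) = x := fun x => by
    rw [← Matrix.mul_assoc, hib, Matrix.one_mul]
  have cb2 : ∀ x : Matrix (Fin n) (Fin n) ℂ, b⁻¹ * (b * x) = x := fun x => by
    rw [← Matrix.mul_assoc, hbi, Matrix.one_mul]
  have cS1 : ∀ x : Matrix (Fin n) (Fin n) ℂ, S * (S⁻¹ * x) = x := fun x => by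
    rw [← Matrix.mul_assoc, hiS, Matrix.one_mul]
  have cS2 : ∀ x : Matrix (Fin n) (Fin n) ℂ, S⁻¹ * (S * x) = x := fun x => by
    rw [← Matrix.mul_assoc, hSi, Matrix.one_mul]
  set U := b⁻¹ * a⁻¹ * S with hU
  have hUH : Uᴴ = S * a⁻¹ * b⁻¹ := by
    simp [hU, Matrix.conjTranspose_mul, Matrix.conjTranspose_nonsing_inv, haH, hbH, hSH,
      Matrix.mul_assoc]
  -- U is unitary
  have hUU : Uᴴ * U = 1 := by
    rw [hUH, hU]
    have h2 : (a * B * a)⁻¹ = a⁻¹ * (b⁻¹ * (b⁻¹ * a⁻¹)) := by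
      rw [← hbb]; simp [Matrix.mul_inv_rev, Matrix.mul_assoc]
    calc S * a⁻¹ * b⁻¹ * (b⁻¹ * a⁻¹ * S)
        = S * ((a * B * a)⁻¹ * S) := by rw [h2]; simp [Matrix.mul_assoc]
      _ = S * ((S * S)⁻¹ * S) := by rw [hSS]
      _ = 1 := by
          rw [Matrix.mul_inv_rev]
          simp [Matrix.mul_assoc, hSi, hiS, cS1, cS2]
  have hUU' : U * Uᴴ = 1 := mul_eq_one_comm.mp hUU
  constructor
  · -- block positivity
    have key : Matrix.fromBlocks A (a * Uᴴ * b) (a * Uᴴ * b)ᴴ B =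
        (Matrix.fromBlocks a (Uᴴ * b) 0 0)ᴴ * (Matrix.fromBlocks a (Uᴴ * b) 0 0) := by
      rw [Matrix.fromBlocks_conjTranspose, Matrix.fromBlocks_multiply]
      have hTL : A = aᴴ * a + 0ᴴ * 0 := by simp [haH, haa]
      have hTR : a * Uᴴ * b = aᴴ * (Uᴴ * b) + 0ᴴ * 0 := by simp [haH, Matrix.mul_assoc]
      have hBL : (a * Uᴴ * b)ᴴ = (Uᴴ * b)ᴴ * a + 0ᴴ * 0 := by
        simp [Matrix.conjTranspose_mul, haH, hbH, Matrix.mul_assoc]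
      have hBR : B = (Uᴴ * b)ᴴ * (Uᴴ * b) + 0ᴴ * 0 := by
        simp only [Matrix.conjTranspose_mul, Matrix.conjTranspose_conjTranspose, hbH,
          Matrix.conjTranspose_zero, Matrix.zero_mul, Matrix.mul_zero, add_zero]
        rw [Matrix.mul_assoc b U (Uᴴ * b), ← Matrix.mul_assoc U Uᴴ b, hUU',
          Matrix.one_mul, hbb]
      rw [← hTL, ← hTR, ← hBL, ← hBR]
    rw [key]
    exact Matrix.posSemidef_conjTranspose_mul_self _
  · -- trace equality
    have hCdef : a * Uᴴ * b = a * S * a⁻¹ := by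
      rw [hUH]
      calc a * (S * a⁻¹ * b⁻¹) * b = a * S * a⁻¹ * (b⁻¹ * b) := by
            simp [Matrix.mul_assoc]
        _ = a * S * a⁻¹ := by rw [hbi, Matrix.mul_one]
    have hSinv : (S⁻¹).PosSemidef := by
      have h := hSPSD.conjTranspose_mul_mul_same S⁻¹
      rwa [Matrix.conjTranspose_nonsing_inv, hSH, hSi, Matrix.one_mul] at h
    have hQPSD : ((a * b)ᴴ * S⁻¹ * (a * b)).PosSemidef :=
      hSinv.conjTranspose_mul_mul_same (a * b)
    have hQform : (a * b)ᴴ = b * a := by simp [Matrix.conjTranspose_mul, haH, hbH]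
    have hQsq : ((a * b)ᴴ * S⁻¹ * (a * b)) ^ 2 = b * A * b := by
      rw [hQform, pow_two]
      calc b * a * S⁻¹ * (a * b) * (b * a * S⁻¹ * (a * b))
          = b * a * (S⁻¹ * (a * (b * b) * a) * S⁻¹) * (a * b) := by
            simp [Matrix.mul_assoc]
        _ = b * a * (S⁻¹ * (S * S) * S⁻¹) * (a * b) := by rw [hbb, hSS]
        _ = b * (a * a) * b := by
            simp [Matrix.mul_assoc, cS1, cS2, hiS, hSi]
        _ = b * A * b := by rw [haa]
    have hQeq : (a * b)ᴴ * S⁻¹ * (a * b) = hSB.sqrt := hQPSD.eq_sqrt_of_sq_eq hSB hQsq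
    rw [hCdef, ← hQeq, hQform]
    have hL : (a * S * a⁻¹).trace = S.trace := by
      rw [Matrix.trace_mul_cycle, hai, Matrix.one_mul]
    have hR : (b * a * S⁻¹ * (a * b)).trace = S.trace := by
      rw [Matrix.trace_mul_comm]
      have h3 : a * b * (b * a * S⁻¹) = S * S * S⁻¹ := by
        rw [hSS, ← hbb]; simp [Matrix.mul_assoc]
      rw [h3, Matrix.mul_assoc, hiS, Matrix.mul_one]
    rw [hL, hR]
end
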